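/- arXiv:2011.13275 — 8 statements merged into one kernel-verified Lean document; each statement's English description precedes it below -/
import Mathlib

section
/- For two points p1=(x1,y1), p2=(x2,y2) in the plane with |x1-x2| = |y1-y2| and p1 ≠ p2, the Manhattan bisector {q : d_M(q,p1) = d_M(q,p2)} has positive (infinite) two-dimensional Lebesgue measure. -/
/-! On a closed quadrant lying beyond both points, `q ↦ dM q p` is affine with the same linear
part for `p = p1` and `p = p2`, so the two distances differ by a constant there. The degeneracy
`|x1 - x2| = |y1 - y2|` makes that constant vanish for a suitably oriented quadrant, which then
lies in the bisector and has infinite area. -/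

open MeasureTheory

/-- Manhattan distance on the plane. -/
noncomputable def dM (p q : ℝ × ℝ) : ℝ := |p.1 - q.1| + |p.2 - q.2|

open Set

lemma volume_prod_eq_top {s t : Set ℝ} (hs : volume s = ⊤) (ht : volume t = ⊤) :
    volume (s ×ˢ t) = ⊤ := by
  rw [Measure.volume_eq_prod, Measure.prod_prod, hs, ht, ENNReal.top_mul_top]

lemma dM_eq_of_le_of_le {p q : ℝ × ℝ} (h1 : p.1 ≤ q.1) (h2 : p.2 ≤ q.2) :
    dM q p = q.1 - p.1 + (q.2 - p.2) := by
  rw [dM, abs_of_nonneg (sub_nonneg.mpr h1), abs_of_nonneg (sub_nonneg.mpr h2)]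

lemma dM_eq_of_le_of_ge {p q : ℝ × ℝ} (h1 : p.1 ≤ q.1) (h2 : q.2 ≤ p.2) :
    dM q p = q.1 - p.1 + (p.2 - q.2) := by
  rw [dM, abs_of_nonneg (sub_nonneg.mpr h1), abs_of_nonpos (sub_nonpos.mpr h2), neg_sub]

lemma Ici_prod_Iic_subset_bisector {p1 p2 : ℝ × ℝ} (h : p1.1 - p2.1 = p1.2 - p2.2) :
    Ici (max p1.1 p2.1) ×ˢ Iic (min p1.2 p2.2) ⊆ {q | dM q p1 = dM q p2} := by
  rintro q ⟨hx, hy⟩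
  simp only [mem_Ici, max_le_iff] at hx
  simp only [mem_Iic, le_min_iff] at hy
  rw [mem_ofPred_eq, dM_eq_of_le_of_ge hx.1 hy.1, dM_eq_of_le_of_ge hx.2 hy.2]
  linarith

lemma Ici_prod_Ici_subset_bisector {p1 p2 : ℝ × ℝ} (h : p1.1 - p2.1 = -(p1.2 - p2.2)) :
    Ici (max p1.1 p2.1) ×ˢ Ici (max p1.2 p2.2) ⊆ {q | dM q p1 = dM q p2} := by
  rintro q ⟨hx, hy⟩
  simp only [mem_Ici, max_le_iff] at hx hy
  rw [mem_ofPred_eq, dM_eq_of_le_of_le hx.1 hy.1, dM_eq_of_le_of_le hx.2 hy.2]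
  linarith

theorem degenerate_bisector_infinite_measure_general (p1 p2 : ℝ × ℝ)
    (hdeg : |p1.1 - p2.1| = |p1.2 - p2.2|) :
    volume {q : ℝ × ℝ | dM q p1 = dM q p2} = ⊤ := by
  rcases abs_eq_abs.mp hdeg with h | h
  · exact measure_mono_top (Ici_prod_Iic_subset_bisector h)
      (volume_prod_eq_top Real.volume_Ici Real.volume_Iic)
  · exact measure_mono_top (Ici_prod_Ici_subset_bisector h)
      (volume_prod_eq_top Real.volume_Ici Real.volume_Ici)

theorem degenerate_bisector_infinite_measure (p1 p2 : ℝ × ℝ)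
    (hdeg : |p1.1 - p2.1| = |p1.2 - p2.2|) (hne : p1 ≠ p2) :
    volume {q : ℝ × ℝ | dM q p1 = dM q p2} = ⊤ :=
  degenerate_bisector_infinite_measure_general p1 p2 hdeg
end

section
/- For two points p1=(x1,y1), p2=(x2,y2) with |x1-x2| > |y1-y2| > 0, the Manhattan bisector of p1 and p2 has two-dimensional Lebesgue measure zero. -/
open MeasureTheory

/-
A horizontal line `y = const` meets the bisector where `|x - x₁| - |x - x₂| = c` with
`c = |y - y₂| - |y - y₁|`, so `|c| ≤ |y₁ - y₂| < |x₁ - x₂|`. In that range the piecewise linear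
function `x ↦ |x - x₁| - |x - x₂|` is strictly monotone, so each such line meets the bisector
at most once, and Fubini gives measure zero.
-/

lemma setOf_abs_sub_sub_abs_sub_eq_subsingleton {a b c : ℝ} (hc : |c| < |a - b|) :
    {x : ℝ | |x - a| - |x - b| = c}.Subsingleton := by
  intro x hx x' hx'
  simp only [Set.mem_ofPred_eq] at hx hx'
  rcases abs_cases (x - a) with ⟨_, _⟩ | ⟨_, _⟩ <;>
  rcases abs_cases (x - b) with ⟨_, _⟩ | ⟨_, _⟩ <;>
  rcases abs_cases (x' - a) with ⟨_, _⟩ | ⟨_, _⟩ <;>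
  rcases abs_cases (x' - b) with ⟨_, _⟩ | ⟨_, _⟩ <;>
  rcases abs_cases (a - b) with ⟨_, _⟩ | ⟨_, _⟩ <;>
  rcases abs_cases c with ⟨_, _⟩ | ⟨_, _⟩ <;>
  linarith

lemma measurableSet_setOf_dM_eq (p1 p2 : ℝ × ℝ) :
    MeasurableSet {q : ℝ × ℝ | dM q p1 = dM q p2} := by
  apply measurableSet_eq_fun <;> unfold dM <;> fun_prop

lemma setOf_dM_eq_horizontal_slice_subsingleton {p1 p2 : ℝ × ℝ}
    (h : |p1.2 - p2.2| < |p1.1 - p2.1|) (y : ℝ) :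
    {x : ℝ | dM (x, y) p1 = dM (x, y) p2}.Subsingleton := by
  have hc : |(|y - p2.2| - |y - p1.2|)| < |p1.1 - p2.1| :=
    calc |(|y - p2.2| - |y - p1.2|)| ≤ |(y - p2.2) - (y - p1.2)| := abs_abs_sub_abs_le_abs_sub _ _
      _ = |p1.2 - p2.2| := by ring_nf
      _ < |p1.1 - p2.1| := h
  refine (setOf_abs_sub_sub_abs_sub_eq_subsingleton hc).anti fun x hx => ?_
  simp only [Set.mem_ofPred_eq, dM] at hx ⊢
  linarith

theorem nondegenerate_bisector_measure_zero_general (p1 p2 : ℝ × ℝ)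
    (h1 : |p1.2 - p2.2| < |p1.1 - p2.1|) :
    volume {q : ℝ × ℝ | dM q p1 = dM q p2} = 0 := by
  rw [Measure.volume_eq_prod, Measure.prod_apply_symm (measurableSet_setOf_dM_eq p1 p2)]
  simp only [Set.preimage_ofPred_eq,
    fun y => (setOf_dM_eq_horizontal_slice_subsingleton h1 y).measure_zero volume,
    lintegral_zero]

theorem nondegenerate_bisector_measure_zero (p1 p2 : ℝ × ℝ)
    (h1 : |p1.2 - p2.2| < |p1.1 - p2.1|) (h2 : 0 < |p1.2 - p2.2|) :
    volume {q : ℝ × ℝ | dM q p1 = dM q p2} = 0 :=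
  nondegenerate_bisector_measure_zero_general p1 p2 h1
end

section
/- For two distinct points p1, p2 with |x1-x2| ≠ |y1-y2|, the Manhattan bisector of p1 and p2 is a closed set whose complement has exactly two connected components, one containing p1 and one containing p2. -/
/-! Being strictly closer to `p1` than to `p2` propagates along Manhattan geodesics towards `p1`
(triangle inequality), and from any point `q` the staircase `q → (p1.1, q.2) → p1` is such a
geodesic; hence `{q | dM q p1 < dM q p2}` is path-connected. The complement of the bisector is
the disjoint union of this open set and its mirror image, so these two are its components. -/

open MeasureTheory

section Topology

variable {X α : Type*} [TopologicalSpace X] [LinearOrder α] [TopologicalSpace α]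
  [OrderClosedTopology α]

theorem connectedComponentIn_compl_setOf_eq {f g : X → α} (hf : Continuous f)
    (hg : Continuous g) (hlt : IsPreconnected {x | f x < g x}) {x : X} (hx : f x < g x) :
    connectedComponentIn {x | f x = g x}ᶜ x = {x | f x < g x} := by
  refine subset_antisymm ?_ (hlt.subset_connectedComponentIn hx fun y hy => hy.ne)
  refine isPreconnected_connectedComponentIn.subset_left_of_subset_union
    (isOpen_lt hf hg) (isOpen_lt hg hf) ?_ ?_ ⟨x, mem_connectedComponentIn hx.ne, hx⟩
  · exact Set.disjoint_left.mpr fun y hfg hgf => lt_asymm hfg hgf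
  · exact (connectedComponentIn_subset _ _).trans fun y hy => lt_or_gt_of_ne hy

end Topology

namespace Manhattan

theorem dM_self (p : ℝ × ℝ) : dM p p = 0 := by simp [dM]

theorem dM_pos {p q : ℝ × ℝ} (h : p ≠ q) : 0 < dM p q := by
  rcases not_and_or.mp (mt Prod.ext_iff.mpr h) with h1 | h2
  · exact add_pos_of_pos_of_nonneg (abs_sub_pos.mpr h1) (abs_nonneg _)
  · exact add_pos_of_nonneg_of_pos (abs_nonneg _) (abs_sub_pos.mpr h2)

theorem dM_triangle (a b c : ℝ × ℝ) : dM a c ≤ dM a b + dM b c := by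
  simp only [dM]
  linarith [abs_sub_le a.1 b.1 c.1, abs_sub_le a.2 b.2 c.2]

theorem continuous_dM_left (p : ℝ × ℝ) : Continuous fun q => dM q p := by
  unfold dM
  fun_prop

theorem dM_add_dM_of_mem_segment {q r m : ℝ × ℝ} (hr : r ∈ segment ℝ q m) :
    dM q r + dM r m = dM q m := by
  rw [segment_eq_image'] at hr
  obtain ⟨t, ⟨ht0, ht1⟩, rfl⟩ := hr
  have key (a b : ℝ) : |a - (a + t * (b - a))| + |a + t * (b - a) - b| = |a - b| := by
    rw [show a - (a + t * (b - a)) = t * (a - b) by ring,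
      show a + t * (b - a) - b = (1 - t) * (a - b) by ring, abs_mul, abs_mul,
      abs_of_nonneg ht0, abs_of_nonneg (sub_nonneg.mpr ht1)]
    ring
  simp only [dM, Prod.fst_add, Prod.snd_add, Prod.smul_fst, Prod.smul_snd, Prod.fst_sub,
    Prod.snd_sub, smul_eq_mul]
  linarith [key q.1 m.1, key q.2 m.2]

theorem dM_corner (q p : ℝ × ℝ) : dM q (p.1, q.2) + dM (p.1, q.2) p = dM q p := by
  simp [dM]

theorem dM_lt_dM_of_between {q r p p' : ℝ × ℝ} (hbtw : dM q r + dM r p ≤ dM q p)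
    (hq : dM q p < dM q p') : dM r p < dM r p' := by
  linarith [dM_triangle q r p']

theorem isPathConnected_setOf_dM_lt {p p' : ℝ × ℝ} (hne : p ≠ p') :
    IsPathConnected {q | dM q p < dM q p'} := by
  refine ⟨p, by simpa [dM_self] using dM_pos hne, fun {q} hq => ?_⟩
  have hqm : segment ℝ q (p.1, q.2) ⊆ {q | dM q p < dM q p'} := fun r hr => by
    have := dM_add_dM_of_mem_segment hr
    exact dM_lt_dM_of_between (by linarith [dM_triangle r (p.1, q.2) p, dM_corner q p]) hq
  have hmp : segment ℝ (p.1, q.2) p ⊆ {q | dM q p < dM q p'} := fun r hr => by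
    have := dM_add_dM_of_mem_segment hr
    exact dM_lt_dM_of_between (by linarith [dM_triangle q (p.1, q.2) r, dM_corner q p]) hq
  exact ((JoinedIn.of_segment_subset hqm).trans (JoinedIn.of_segment_subset hmp)).symm

theorem connectedComponentIn_bisector_compl {p p' : ℝ × ℝ} (hne : p ≠ p') :
    connectedComponentIn {q | dM q p = dM q p'}ᶜ p = {q | dM q p < dM q p'} :=
  connectedComponentIn_compl_setOf_eq (continuous_dM_left p) (continuous_dM_left p')
    (isPathConnected_setOf_dM_lt hne).isConnected.isPreconnected
    (by simpa [dM_self] using dM_pos hne)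

end Manhattan

open Manhattan in
theorem nondegenerate_bisector_two_components_general (p1 p2 : ℝ × ℝ) (hne : p1 ≠ p2) :
    IsClosed {q : ℝ × ℝ | dM q p1 = dM q p2} ∧
    p1 ∈ {q : ℝ × ℝ | dM q p1 = dM q p2}ᶜ ∧
    p2 ∈ {q : ℝ × ℝ | dM q p1 = dM q p2}ᶜ ∧
    connectedComponentIn {q : ℝ × ℝ | dM q p1 = dM q p2}ᶜ p1 ≠
      connectedComponentIn {q : ℝ × ℝ | dM q p1 = dM q p2}ᶜ p2 ∧
    ∀ x ∈ {q : ℝ × ℝ | dM q p1 = dM q p2}ᶜ,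
      x ∈ connectedComponentIn {q : ℝ × ℝ | dM q p1 = dM q p2}ᶜ p1 ∨
      x ∈ connectedComponentIn {q : ℝ × ℝ | dM q p1 = dM q p2}ᶜ p2 := by
  have hp1 : dM p1 p1 < dM p1 p2 := by simpa [dM_self] using dM_pos hne
  have hp2 : dM p2 p2 < dM p2 p1 := by simpa [dM_self] using dM_pos hne.symm
  have hsymm : {q : ℝ × ℝ | dM q p1 = dM q p2} = {q | dM q p2 = dM q p1} := by
    simp_rw [eq_comm]
  have hC2 := connectedComponentIn_bisector_compl hne.symm
  rw [← hsymm] at hC2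
  rw [connectedComponentIn_bisector_compl hne, hC2]
  refine ⟨isClosed_eq (continuous_dM_left p1) (continuous_dM_left p2), hp1.ne, hp2.ne',
    fun h => ?_, fun x hx => lt_or_gt_of_ne hx⟩
  have : p1 ∈ {q : ℝ × ℝ | dM q p2 < dM q p1} := h ▸ hp1
  exact lt_asymm hp1 this

theorem nondegenerate_bisector_two_components (p1 p2 : ℝ × ℝ) (hne : p1 ≠ p2)
    (h : |p1.1 - p2.1| ≠ |p1.2 - p2.2|) :
    IsClosed {q : ℝ × ℝ | dM q p1 = dM q p2} ∧
    p1 ∈ {q : ℝ × ℝ | dM q p1 = dM q p2}ᶜ ∧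
    p2 ∈ {q : ℝ × ℝ | dM q p1 = dM q p2}ᶜ ∧
    connectedComponentIn {q : ℝ × ℝ | dM q p1 = dM q p2}ᶜ p1 ≠
      connectedComponentIn {q : ℝ × ℝ | dM q p1 = dM q p2}ᶜ p2 ∧
    ∀ x ∈ {q : ℝ × ℝ | dM q p1 = dM q p2}ᶜ,
      x ∈ connectedComponentIn {q : ℝ × ℝ | dM q p1 = dM q p2}ᶜ p1 ∨
      x ∈ connectedComponentIn {q : ℝ × ℝ | dM q p1 = dM q p2}ᶜ p2 :=
  nondegenerate_bisector_two_components_general p1 p2 hne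
end

section
/- Let P be a finite set of points in ℝ² and p ∈ P. The Manhattan Voronoi cell V(p) = {q : ∀ r ∈ P, r ≠ p → d_M(q,p) < d_M(q,r)} is star-shaped with respect to p; that is, for every q ∈ V(p), every point on the segment from p to q lies in V(p). -/
theorem dist_lt_dist_of_mem_segment {E : Type*} [SeminormedAddCommGroup E] [NormedSpace ℝ E]
    {p q r z : E} (hz : z ∈ segment ℝ p q) (hq : dist q p < dist q r) :
    dist z p < dist z r := by
  have hsplit : dist p z + dist z q = dist p q := dist_add_dist_of_mem_segment hz
  calc dist z p = dist q p - dist q z := by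
        rw [dist_comm z p, dist_comm q p, dist_comm q z]; linarith
    _ < dist q r - dist q z := by linarith
    _ ≤ dist z r := by linarith [dist_triangle q z r]

theorem WithLp.toLp_mem_segment {𝕜 V : Type*} [Semiring 𝕜] [PartialOrder 𝕜] [AddCommGroup V]
    [Module 𝕜 V] (p : ENNReal) {x y z : V} (hz : z ∈ segment 𝕜 x y) :
    WithLp.toLp p z ∈ segment 𝕜 (WithLp.toLp p x) (WithLp.toLp p y) := by
  obtain ⟨a, b, ha, hb, hab, rfl⟩ := hz
  exact ⟨a, b, ha, hb, hab, by simp only [WithLp.toLp_add, WithLp.toLp_smul]⟩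

theorem dM_eq_dist_toLp (x y : ℝ × ℝ) : dM x y = dist (WithLp.toLp 1 x) (WithLp.toLp 1 y) := by
  simp [WithLp.prod_dist_eq_of_L1, Real.dist_eq, dM]

theorem voronoi_cell_star_shaped_general (P : Finset (ℝ × ℝ)) (p : ℝ × ℝ)
    (q : ℝ × ℝ) (hq : q ∈ {z : ℝ × ℝ | ∀ r ∈ P, r ≠ p → dM z p < dM z r}) :
    segment ℝ p q ⊆ {z : ℝ × ℝ | ∀ r ∈ P, r ≠ p → dM z p < dM z r} := by
  intro z hz r hr hrp
  have hqr : dM q p < dM q r := hq r hr hrp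
  rw [dM_eq_dist_toLp, dM_eq_dist_toLp] at hqr ⊢
  exact dist_lt_dist_of_mem_segment (WithLp.toLp_mem_segment 1 hz) hqr

theorem voronoi_cell_star_shaped (P : Finset (ℝ × ℝ)) (p : ℝ × ℝ) (hp : p ∈ P)
    (q : ℝ × ℝ) (hq : q ∈ {z : ℝ × ℝ | ∀ r ∈ P, r ≠ p → dM z p < dM z r}) :
    segment ℝ p q ⊆ {z : ℝ × ℝ | ∀ r ∈ P, r ≠ p → dM z p < dM z r} :=
  voronoi_cell_star_shaped_general P p q hq
end

section
/- Let K be a measurable subset of ℝ² with finite area whose intersection with the vertical line through p has measure zero, and suppose the area of K strictly to the left of p exceeds the area strictly to the right. Then the function p ↦ ∫_K d_M(q,p) dq strictly decreases when p is moved leftwards by a sufficiently small ε > 0 (with the y-coordinate fixed). -/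
open MeasureTheory

/-!
Only the horizontal part `|q.1 - x|` of the distance changes when `p` moves, and moving `x`
from `a` to `a - ε` changes it by `-ε` on the mass at `q.1 ≤ a - ε` and by at most `ε`
elsewhere. So the integral drops once more than half of the mass of `K` lies at `q.1 ≤ a - ε`,
which holds for small `ε` because the mass of `K` strictly left of `p` is more than half of
its total mass (the vertical line through `p` being null).
-/

section

open Filter Topology

variable {α : Type*} [MeasurableSpace α] {ν : Measure α} {f : α → ℝ} {a : ℝ}

theorem measure_univ_lt_two_mul_measure_lt [IsFiniteMeasure ν]
    (hline : ν {x | f x = a} = 0) (hlr : ν {x | a < f x} < ν {x | f x < a}) :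
    ν Set.univ < 2 * ν {x | f x < a} := by
  have hcover : Set.univ ⊆ ({x | f x < a} ∪ {x | f x = a}) ∪ {x | a < f x} := fun x _ => by
    rcases lt_trichotomy (f x) a with h | h | h
    exacts [Or.inl (Or.inl h), Or.inl (Or.inr h), Or.inr h]
  calc ν Set.univ ≤ ν {x | f x < a} + ν {x | f x = a} + ν {x | a < f x} :=
        (measure_mono hcover).trans <|
          (measure_union_le _ _).trans (by gcongr; exact measure_union_le _ _)
    _ < ν {x | f x < a} + ν {x | f x < a} := by
        rw [hline, add_zero]
        exact ENNReal.add_lt_add_left (measure_ne_top _ _) hlr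
    _ = 2 * ν {x | f x < a} := (two_mul _).symm

theorem tendsto_measure_le_sub_one_div_succ :
    Tendsto (fun n : ℕ => ν {x | f x ≤ a - 1 / (n + 1)}) atTop (𝓝 (ν {x | f x < a})) := by
  have hmono : Monotone fun n : ℕ => {x | f x ≤ a - 1 / (n + 1)} := fun m n hmn x hx =>
    le_trans (b := a - 1 / (m + 1)) hx (by gcongr)
  have hunion : ⋃ n : ℕ, {x | f x ≤ a - 1 / (n + 1)} = {x | f x < a} := by
    ext x
    simp only [Set.mem_iUnion, Set.mem_ofPred_eq]
    constructor
    · rintro ⟨n, hn⟩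
      have : (0 : ℝ) < 1 / (n + 1) := by positivity
      linarith
    · intro hx
      obtain ⟨n, hn⟩ := exists_nat_one_div_lt (sub_pos.2 hx)
      exact ⟨n, by linarith⟩
  exact hunion ▸ tendsto_measure_iUnion_atTop hmono

theorem exists_pos_forall_measure_univ_lt_two_mul_measure_le_sub [IsFiniteMeasure ν]
    (hline : ν {x | f x = a} = 0) (hlr : ν {x | a < f x} < ν {x | f x < a}) :
    ∃ δ > 0, ∀ ε ≤ δ, ν Set.univ < 2 * ν {x | f x ≤ a - ε} := by
  obtain ⟨n, hn⟩ := ((ENNReal.Tendsto.const_mul tendsto_measure_le_sub_one_div_succ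
    (Or.inr ENNReal.ofNat_ne_top)).eventually_const_lt
    (measure_univ_lt_two_mul_measure_lt hline hlr)).exists
  refine ⟨1 / (n + 1), by positivity, fun ε hε => hn.trans_le ?_⟩
  gcongr 2 * ν ?_
  exact fun x (hx : f x ≤ a - 1 / (n + 1)) => show f x ≤ a - ε by linarith

theorem integrable_abs_sub_sub_abs_sub [IsFiniteMeasure ν] (hf : Measurable f) (b c : ℝ) :
    Integrable (fun x => |f x - b| - |f x - c|) ν :=
  Integrable.of_bound (by fun_prop) |c - b| <| ae_of_all _ fun x => by
    simpa [Real.norm_eq_abs] using abs_abs_sub_abs_le_abs_sub (f x - b) (f x - c)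

theorem integral_abs_sub_sub_abs_sub_le [IsFiniteMeasure ν] (hf : Measurable f) {ε : ℝ}
    (hε : 0 ≤ ε) :
    ∫ x, (|f x - (a - ε)| - |f x - a|) ∂ν ≤
      ε * (ν.real Set.univ - 2 * ν.real {x | f x ≤ a - ε}) := by
  set S := {x | f x ≤ a - ε}
  have hS : MeasurableSet S := measurableSet_le hf measurable_const
  have hbound : ∀ x, |f x - (a - ε)| - |f x - a| ≤ ε - 2 * ε * S.indicator 1 x := by
    intro x
    by_cases hx : x ∈ S
    · have hx' : f x ≤ a - ε := hx
      rw [Set.indicator_of_mem hx, Pi.one_apply, abs_of_nonpos (by linarith),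
        abs_of_nonpos (by linarith)]
      linarith
    · rw [Set.indicator_of_notMem hx, mul_zero, sub_zero]
      calc |f x - (a - ε)| - |f x - a| ≤ |(f x - (a - ε)) - (f x - a)| :=
            abs_sub_abs_le_abs_sub _ _
        _ = ε := by rw [sub_sub_sub_cancel_left, sub_sub_cancel, abs_of_nonneg hε]
  have hS_int : Integrable (S.indicator (1 : α → ℝ)) ν := (integrable_const 1).indicator hS
  calc ∫ x, (|f x - (a - ε)| - |f x - a|) ∂ν
        ≤ ∫ x, (ε - 2 * ε * S.indicator 1 x) ∂ν :=
        integral_mono (integrable_abs_sub_sub_abs_sub hf _ _)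
          ((integrable_const ε).sub (hS_int.const_mul _)) hbound
    _ = ε * (ν.real Set.univ - 2 * ν.real S) := by
        rw [integral_sub (integrable_const ε) (hS_int.const_mul _), integral_const,
          integral_const_mul, integral_indicator_one hS, smul_eq_mul]
        ring

theorem integral_abs_sub_sub_abs_sub_neg [IsFiniteMeasure ν] (hf : Measurable f) {ε : ℝ}
    (hε : 0 < ε) (h : ν Set.univ < 2 * ν {x | f x ≤ a - ε}) :
    ∫ x, (|f x - (a - ε)| - |f x - a|) ∂ν < 0 := by
  have hreal : ν.real Set.univ < 2 * ν.real {x | f x ≤ a - ε} := by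
    simpa [measureReal_def, ENNReal.toReal_mul] using
      (ENNReal.toReal_lt_toReal (measure_ne_top _ _) (by finiteness)).2 h
  exact (integral_abs_sub_sub_abs_sub_le hf hε.le).trans_lt
    (mul_neg_of_pos_of_neg hε (by linarith))

end

theorem moving_left_decreases_average_distance_general (K : Set (ℝ × ℝ))
    (hfin : volume K ≠ ⊤) (p : ℝ × ℝ)
    (hint : IntegrableOn (fun q => dM q p) K volume)
    (hline : volume (K ∩ {q | q.1 = p.1}) = 0)
    (hlr : volume (K ∩ {q | p.1 < q.1}) < volume (K ∩ {q | q.1 < p.1})) :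
    ∃ ε₀ : ℝ, 0 < ε₀ ∧ ∀ ε : ℝ, 0 < ε → ε ≤ ε₀ →
      (∫ q in K, dM q (p.1 - ε, p.2)) < ∫ q in K, dM q p := by
  have := isFiniteMeasure_restrict.2 hfin
  have hrestrict {s : Set (ℝ × ℝ)} (hs : MeasurableSet s) :
      volume.restrict K s = volume (K ∩ s) := by
    rw [Measure.restrict_apply hs, Set.inter_comm]
  obtain ⟨δ, hδ, hmass⟩ := exists_pos_forall_measure_univ_lt_two_mul_measure_le_sub
    (ν := volume.restrict K) (f := Prod.fst) (a := p.1)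
    (by rwa [hrestrict (measurableSet_eq_fun measurable_fst measurable_const)])
    (by rwa [hrestrict (measurableSet_lt measurable_const measurable_fst),
      hrestrict (measurableSet_lt measurable_fst measurable_const)])
  refine ⟨δ, hδ, fun ε hε hεδ => ?_⟩
  have hshift : (fun q => dM q (p.1 - ε, p.2)) =
      fun q => dM q p + (|q.1 - (p.1 - ε)| - |q.1 - p.1|) := by
    funext q
    simp only [dM]
    ring
  rw [hshift, integral_add hint (integrable_abs_sub_sub_abs_sub measurable_fst _ _)]
  linarith [integral_abs_sub_sub_abs_sub_neg measurable_fst hε (hmass ε hεδ)]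

theorem moving_left_decreases_average_distance (K : Set (ℝ × ℝ)) (hK : MeasurableSet K)
    (hfin : volume K ≠ ⊤) (p : ℝ × ℝ)
    (hint : IntegrableOn (fun q => dM q p) K volume)
    (hline : volume (K ∩ {q | q.1 = p.1}) = 0)
    (hlr : volume (K ∩ {q | p.1 < q.1}) < volume (K ∩ {q | q.1 < p.1})) :
    ∃ ε₀ : ℝ, 0 < ε₀ ∧ ∀ ε : ℝ, 0 < ε → ε ≤ ε₀ →
      (∫ q in K, dM q (p.1 - ε, p.2)) < ∫ q in K, dM q p :=
  moving_left_decreases_average_distance_general K hfin p hint hline hlr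
end

section
/- Let W be a finite set of points in a rectangle R, w ∈ W, and let H be the left half cell of w (the part of the Manhattan Voronoi cell of w weakly left of the vertical line through w). For every ε > 0 there exists δ > 0 such that placing a new point b = w - (δ, 0) yields area(V^{W∪{b}}(b) ∩ H) ≥ area(H) - ε. -/
open MeasureTheory

/-- The (open) Manhattan Voronoi cell of `p` among the sites `P`, within the region `R`. -/
def cell (R : Set (ℝ × ℝ)) (P : Finset (ℝ × ℝ)) (p : ℝ × ℝ) : Set (ℝ × ℝ) :=
  {q | q ∈ R ∧ ∀ r ∈ P, r ≠ p → dM q p < dM q r}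

/-!
For a point `q` at least `δ` to the left of `p`, the site `b = p - (δ, 0)` is exactly `δ` closer
to `q` than `p` is, so `b` captures every such point of the half cell of `p`. What remains lies in
the vertical strip of width `δ` left of `p`, of area at most `δ h`; take `δ = ε / (|h| + 1)`.
-/

lemma dM_sub_fst_of_le {p q : ℝ × ℝ} {δ : ℝ} (hδ : 0 ≤ δ) (hq : q.1 ≤ p.1 - δ) :
    dM q (p.1 - δ, p.2) = dM q p - δ := by
  simp only [dM]
  rw [abs_of_nonpos (by linarith), abs_of_nonpos (by linarith : q.1 - p.1 ≤ 0)]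
  ring

lemma cell_inter_fst_le_subset_cell_insert (R : Set (ℝ × ℝ)) (W : Finset (ℝ × ℝ))
    (p : ℝ × ℝ) {δ : ℝ} (hδ : 0 < δ) :
    cell R W p ∩ {q | q.1 ≤ p.1 - δ} ⊆ cell R (insert (p.1 - δ, p.2) W) (p.1 - δ, p.2) := by
  rintro q ⟨⟨hqR, hcloser⟩, hq⟩
  have hdist := dM_sub_fst_of_le hδ.le hq
  refine ⟨hqR, fun r hr hrb => ?_⟩
  rcases Finset.mem_insert.mp hr with rfl | hrW
  · exact absurd rfl hrb
  · by_cases hrp : r = p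
    · subst hrp; linarith
    · linarith [hcloser r hrW hrp]

lemma volume_Icc_inter_vertical_strip_le (c d : ℝ × ℝ) {a b : ℝ} (hab : a ≤ b) :
    volume (Set.Icc c d ∩ {q | q.1 ∈ Set.Ioc a b}) ≤ ENNReal.ofReal ((b - a) * (d.2 - c.2)) := by
  have hsub : Set.Icc c d ∩ {q | q.1 ∈ Set.Ioc a b} ⊆ Set.Ioc a b ×ˢ Set.Icc c.2 d.2 :=
    fun q ⟨⟨hcq, hqd⟩, hq⟩ => ⟨hq, hcq.2, hqd.2⟩
  calc _ ≤ volume (Set.Ioc a b ×ˢ Set.Icc c.2 d.2) := measure_mono hsub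
    _ = _ := by
      rw [Measure.volume_eq_prod, Measure.prod_prod, Real.volume_Ioc, Real.volume_Icc,
        ENNReal.ofReal_mul (by linarith)]

theorem black_can_steal_half_cell_general (w h : ℝ) (W : Finset (ℝ × ℝ))
    (p : ℝ × ℝ)
    (ε : ℝ) (hε : 0 < ε) :
    ∃ δ : ℝ, 0 < δ ∧
      volume (cell (Set.Icc ((0, 0) : ℝ × ℝ) (w, h)) (insert ((p.1 - δ, p.2)) W)
              ((p.1 - δ, p.2)) ∩
            (cell (Set.Icc ((0, 0) : ℝ × ℝ) (w, h)) W p ∩ {q | q.1 ≤ p.1}))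
        ≥ volume (cell (Set.Icc ((0, 0) : ℝ × ℝ) (w, h)) W p ∩ {q | q.1 ≤ p.1})
            - ENNReal.ofReal ε := by
  set R := Set.Icc ((0, 0) : ℝ × ℝ) (w, h)
  set H := cell R W p ∩ {q | q.1 ≤ p.1}
  set δ := ε / (|h| + 1)
  have hδ : 0 < δ := by positivity
  have hδh : (p.1 - (p.1 - δ)) * (h - 0) ≤ ε := by
    have : δ * (|h| + 1) = ε := div_mul_cancel₀ ε (by positivity)
    nlinarith [le_abs_self h]
  refine ⟨δ, hδ, ?_⟩
  set L := {q : ℝ × ℝ | q.1 ≤ p.1 - δ}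
  have hsteal : H ∩ L ⊆ cell R (insert (p.1 - δ, p.2) W) (p.1 - δ, p.2) ∩ H := fun q hq =>
    ⟨cell_inter_fst_le_subset_cell_insert R W p hδ ⟨hq.1.1, hq.2⟩, hq.1⟩
  have hstrip : H \ L ⊆ R ∩ {q | q.1 ∈ Set.Ioc (p.1 - δ) p.1} := fun q hq =>
    ⟨hq.1.1.1, not_le.mp hq.2, hq.1.2⟩
  rw [ge_iff_le, tsub_le_iff_right]
  calc volume H ≤ volume (H ∩ L) + volume (H \ L) := measure_le_inter_add_sdiff _ _ _
    _ ≤ _ := add_le_add (measure_mono hsteal) <| (measure_mono hstrip).trans <|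
      (volume_Icc_inter_vertical_strip_le _ _ (by linarith)).trans (ENNReal.ofReal_le_ofReal hδh)

theorem black_can_steal_half_cell (w h : ℝ) (W : Finset (ℝ × ℝ))
    (hWR : ↑W ⊆ Set.Icc ((0, 0) : ℝ × ℝ) (w, h)) (p : ℝ × ℝ) (hp : p ∈ W)
    (ε : ℝ) (hε : 0 < ε) :
    ∃ δ : ℝ, 0 < δ ∧
      volume (cell (Set.Icc ((0, 0) : ℝ × ℝ) (w, h)) (insert ((p.1 - δ, p.2)) W)
              ((p.1 - δ, p.2)) ∩
            (cell (Set.Icc ((0, 0) : ℝ × ℝ) (w, h)) W p ∩ {q | q.1 ≤ p.1}))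
        ≥ volume (cell (Set.Icc ((0, 0) : ℝ × ℝ) (w, h)) W p ∩ {q | q.1 ≤ p.1})
            - ENNReal.ofReal ε :=
  black_can_steal_half_cell_general w h W p ε hε
end

section
/- Let W be the 1×n grid in R = [0,ρ] × [0,1] with ρ ≥ n, i.e., W = {((2i-1)ρ/(2n), 1/2) : i = 1,…,n}. For every point b ∉ W placed on the horizontal centre line y = 1/2 strictly between two consecutive grid points, the Manhattan Voronoi cell of b with respect to W ∪ {b} has area exactly ρ/(2n), and for b placed at height |y - 1/2| = t > 0 between two grid points (with horizontal distance to the nearest grid point exceeding t), the cell area is ρ/(2n) - t². -/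
/-!
Only the two grid points adjacent to `b` matter: every other grid point lies farther out on the
same horizontal line, so it is beaten by `b` as soon as the nearer neighbour is. Against those two
neighbours, row `y` of the cell is the open interval between the two Manhattan bisectors, of length
`ρ / (2n) + h(y)` with `h(y) = |y - 1/2| - |y - b₂|`, and `∫₀¹ h = -(b₂ - 1/2)²`. The condition
that `b` is farther than `|b₂ - 1/2|` from both neighbours keeps both bisectors strictly between
them.
-/

open MeasureTheory

/-- The `1 × n` grid of white points in the rectangle `[0,ρ] × [0,1]`. -/
def grid (n : ℕ) (ρ : ℝ) : Set (ℝ × ℝ) :=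
  {q | ∃ i : ℕ, 1 ≤ i ∧ i ≤ n ∧ q = ((2*(i:ℝ) - 1) * ρ / (2*(n:ℝ)), 1/2)}

open Set

noncomputable def heightAdvantage (c b₂ y : ℝ) : ℝ := |y - c| - |y - b₂|

lemma abs_heightAdvantage_le (c b₂ y : ℝ) : |heightAdvantage c b₂ y| ≤ |b₂ - c| := by
  simpa [heightAdvantage] using abs_abs_sub_abs_le_abs_sub (y - c) (y - b₂)

@[fun_prop]
lemma continuous_heightAdvantage (c b₂ : ℝ) : Continuous (heightAdvantage c b₂) := by
  unfold heightAdvantage; fun_prop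

lemma integral_abs_sub_of_mem_Icc {c : ℝ} (hc : c ∈ Icc (0 : ℝ) 1) :
    ∫ y in (0 : ℝ)..1, |y - c| = c ^ 2 - c + 1 / 2 := by
  have hint (a b : ℝ) : IntervalIntegrable (fun y => |y - c|) volume a b :=
    (by fun_prop : Continuous fun y : ℝ => |y - c|).intervalIntegrable a b
  have below : EqOn (fun y => |y - c|) (fun y => c - y) (uIcc 0 c) := by
    intro y hy
    rw [uIcc_of_le hc.1] at hy
    simp only [abs_of_nonpos (sub_nonpos.2 hy.2), neg_sub]
  have above : EqOn (fun y => |y - c|) (fun y => y - c) (uIcc c 1) := by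
    intro y hy
    rw [uIcc_of_le hc.2] at hy
    simp only [abs_of_nonneg (sub_nonneg.2 hy.1)]
  rw [← intervalIntegral.integral_add_adjacent_intervals (hint 0 c) (hint c 1),
    intervalIntegral.integral_congr below, intervalIntegral.integral_congr above]
  simp only [intervalIntegral.integral_comp_sub_left fun y => y,
    intervalIntegral.integral_comp_sub_right fun y => y, integral_id]
  ring

lemma integral_heightAdvantage {c b₂ : ℝ} (hc : c ∈ Icc (0 : ℝ) 1) (hb : b₂ ∈ Icc (0 : ℝ) 1) :
    ∫ y in (0 : ℝ)..1, heightAdvantage c b₂ y = (b₂ - c) * (1 - b₂ - c) := by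
  unfold heightAdvantage
  rw [intervalIntegral.integral_sub (Continuous.intervalIntegrable (by fun_prop) _ _)
    (Continuous.intervalIntegrable (by fun_prop) _ _), integral_abs_sub_of_mem_Icc hc,
    integral_abs_sub_of_mem_Icc hb]
  ring

lemma abs_sub_lt_abs_sub_add_iff_of_lt {w β s x : ℝ} (h : |s| < β - w) :
    |x - β| < |x - w| + s ↔ (β + w - s) / 2 < x := by
  obtain ⟨hs₁, hs₂⟩ := abs_lt.1 h
  constructor
  · intro hx
    rcases le_total x w with hxw | hwx
    · rw [abs_of_nonpos (by linarith), abs_of_nonpos (by linarith)] at hx; linarith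
    · rw [abs_of_nonneg (sub_nonneg.2 hwx)] at hx; linarith [neg_abs_le (x - β)]
  · intro hx
    rw [abs_of_nonneg (by linarith : 0 ≤ x - w), abs_sub_lt_iff]
    constructor <;> linarith

lemma abs_sub_lt_abs_sub_add_iff_of_gt {w β s x : ℝ} (h : |s| < w - β) :
    |x - β| < |x - w| + s ↔ x < (β + w + s) / 2 := by
  have key := abs_sub_lt_abs_sub_add_iff_of_lt (x := -x) (show |s| < -β - -w by linarith)
  rw [← abs_neg (x - β), ← abs_neg (x - w)]
  rw [show -(x - β) = -x - -β by ring, show -(x - w) = -x - -w by ring, key]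
  constructor <;> intro <;> linarith

lemma forall_abs_sub_lt_abs_sub_add_iff {W : Set ℝ} {u v β s x : ℝ} (hu : u ∈ W) (hv : v ∈ W)
    (hW : ∀ w ∈ W, w ≤ u ∨ v ≤ w) (hsu : |s| < β - u) (hsv : |s| < v - β) :
    (∀ w ∈ W, |x - β| < |x - w| + s) ↔ x ∈ Ioo ((β + u - s) / 2) ((β + v + s) / 2) := by
  refine ⟨fun hx => ⟨(abs_sub_lt_abs_sub_add_iff_of_lt hsu).1 (hx u hu),
    (abs_sub_lt_abs_sub_add_iff_of_gt hsv).1 (hx v hv)⟩, fun ⟨hxu, hxv⟩ w hw => ?_⟩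
  rcases hW w hw with hwu | hvw
  · exact (abs_sub_lt_abs_sub_add_iff_of_lt (by linarith)).2 (by linarith)
  · exact (abs_sub_lt_abs_sub_add_iff_of_gt (by linarith)).2 (by linarith)

lemma dM_lt_dM_iff (q b w : ℝ × ℝ) :
    dM q b < dM q w ↔ |q.1 - b.1| < |q.1 - w.1| + heightAdvantage w.2 b.2 q.2 := by
  unfold dM heightAdvantage
  constructor <;> intro <;> linarith

def manhattanVoronoiCell (W : Set (ℝ × ℝ)) (b : ℝ × ℝ) : Set (ℝ × ℝ) :=
  {q | ∀ w ∈ W, dM q b < dM q w}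

theorem manhattanVoronoiCell_eq_of_forall_snd_eq {W : Set (ℝ × ℝ)} {b : ℝ × ℝ} {c u v : ℝ}
    (hu : (u, c) ∈ W) (hv : (v, c) ∈ W) (hW : ∀ w ∈ W, w.2 = c ∧ (w.1 ≤ u ∨ v ≤ w.1))
    (hbu : u + |b.2 - c| < b.1) (hbv : b.1 < v - |b.2 - c|) :
    manhattanVoronoiCell W b = {q | q.1 ∈ Ioo ((b.1 + u - heightAdvantage c b.2 q.2) / 2)
      ((b.1 + v + heightAdvantage c b.2 q.2) / 2)} := by
  ext q
  have hs := abs_heightAdvantage_le c b.2 q.2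
  rw [mem_ofPred_eq, ← forall_abs_sub_lt_abs_sub_add_iff (W := Prod.fst '' W)
    (mem_image_of_mem _ hu) (mem_image_of_mem _ hv) (forall_mem_image.2 fun w hw => (hW w hw).2)
    (by linarith) (by linarith), forall_mem_image]
  refine forall₂_congr fun w hw => ?_
  rw [dM_lt_dM_iff, (hW w hw).1]

theorem volume_Icc_inter_setOf_fst_mem_Ioo {f g : ℝ → ℝ} {a₁ a₂ b₁ b₂ : ℝ}
    (hf : Continuous f) (hg : Continuous g) (hab : a₂ ≤ b₂)
    (hf₁ : ∀ y ∈ Icc a₂ b₂, a₁ ≤ f y) (hg₁ : ∀ y ∈ Icc a₂ b₂, g y ≤ b₁)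
    (hfg : ∀ y ∈ Icc a₂ b₂, f y ≤ g y) :
    volume (Icc (a₁, a₂) (b₁, b₂) ∩ {q : ℝ × ℝ | q.1 ∈ Ioo (f q.2) (g q.2)})
      = ENNReal.ofReal (∫ y in a₂..b₂, (g y - f y)) := by
  have hset : Icc (a₁, a₂) (b₁, b₂) ∩ {q : ℝ × ℝ | q.1 ∈ Ioo (f q.2) (g q.2)}
      = Prod.swap ⁻¹' regionBetween f g (Icc a₂ b₂) := by
    ext ⟨x, y⟩
    simp only [regionBetween, mem_inter_iff, mem_preimage, Prod.swap_prod_mk, mem_ofPred_eq,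
      mem_Icc, mem_Ioo, Prod.mk_le_mk]
    constructor
    · rintro ⟨⟨⟨-, hy₁⟩, -, hy₂⟩, hx⟩
      exact ⟨⟨hy₁, hy₂⟩, hx⟩
    · rintro ⟨hy, hx₁, hx₂⟩
      exact ⟨⟨⟨(hf₁ y hy).trans hx₁.le, hy.1⟩, hx₂.le.trans (hg₁ y hy), hy.2⟩, hx₁, hx₂⟩
  rw [hset, Measure.volume_eq_prod, (Measure.measurePreserving_swap).measure_preimage
      (measurableSet_regionBetween hf.measurable hg.measurable measurableSet_Icc).nullMeasurableSet,
    volume_regionBetween_eq_integral hf.integrableOn_Icc hg.integrableOn_Icc measurableSet_Icc hfg,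
    integral_Icc_eq_integral_Ioc, ← intervalIntegral.integral_of_le hab]
  rfl

theorem volume_Icc_inter_manhattanVoronoiCell_of_forall_snd_eq {W : Set (ℝ × ℝ)} {b : ℝ × ℝ}
    {c u v a₁ b₁ : ℝ} (hu : (u, c) ∈ W) (hv : (v, c) ∈ W)
    (hW : ∀ w ∈ W, w.2 = c ∧ (w.1 ≤ u ∨ v ≤ w.1))
    (hbu : u + |b.2 - c| < b.1) (hbv : b.1 < v - |b.2 - c|) (ha₁ : a₁ ≤ u) (hb₁ : v ≤ b₁)
    (hc : c ∈ Icc (0 : ℝ) 1) (hb : b.2 ∈ Icc (0 : ℝ) 1) :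
    volume (Icc (a₁, 0) (b₁, 1) ∩ manhattanVoronoiCell W b)
      = ENNReal.ofReal ((v - u) / 2 + (b.2 - c) * (1 - b.2 - c)) := by
  have hs (y : ℝ) := abs_le.1 (abs_heightAdvantage_le c b.2 y)
  rw [manhattanVoronoiCell_eq_of_forall_snd_eq hu hv hW hbu hbv,
    volume_Icc_inter_setOf_fst_mem_Ioo (f := fun y => (b.1 + u - heightAdvantage c b.2 y) / 2)
      (g := fun y => (b.1 + v + heightAdvantage c b.2 y) / 2) (by fun_prop) (by fun_prop)
      zero_le_one (fun y _ => by linarith [hs y]) (fun y _ => by linarith [hs y])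
      (fun y _ => by linarith [hs y])]
  congr 1
  simp_rw [show ∀ y, (b.1 + v + heightAdvantage c b.2 y) / 2
    - (b.1 + u - heightAdvantage c b.2 y) / 2 = (v - u) / 2 + heightAdvantage c b.2 y from
      fun y => by ring]
  rw [intervalIntegral.integral_add intervalIntegrable_const
    ((continuous_heightAdvantage c b.2).intervalIntegrable _ _),
    intervalIntegral.integral_const, integral_heightAdvantage hc hb]
  simp

noncomputable def gridAbscissa (n : ℕ) (ρ : ℝ) (j : ℕ) : ℝ := (2 * (j : ℝ) - 1) * ρ / (2 * (n : ℝ))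

lemma gridAbscissa_succ_sub (n : ℕ) (ρ : ℝ) (j : ℕ) :
    gridAbscissa n ρ (j + 1) - gridAbscissa n ρ j = ρ / n := by
  unfold gridAbscissa; push_cast; ring

lemma gridAbscissa_mono {n : ℕ} {ρ : ℝ} (hρ : 0 ≤ ρ) : Monotone (gridAbscissa n ρ) := by
  intro j k hjk
  unfold gridAbscissa
  gcongr

lemma gridAbscissa_nonneg {n : ℕ} {ρ : ℝ} (hρ : 0 ≤ ρ) {j : ℕ} (hj : 1 ≤ j) :
    0 ≤ gridAbscissa n ρ j := by
  unfold gridAbscissa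
  have : (1 : ℝ) ≤ j := by exact_mod_cast hj
  have : 0 ≤ 2 * (j : ℝ) - 1 := by linarith
  positivity

lemma gridAbscissa_le {n : ℕ} {ρ : ℝ} (hρ : 0 ≤ ρ) {j : ℕ} (hj : 1 ≤ j) (hjn : j ≤ n) :
    gridAbscissa n ρ j ≤ ρ := by
  have hn : (0 : ℝ) < n := by exact_mod_cast hj.trans hjn
  have : (j : ℝ) ≤ n := by exact_mod_cast hjn
  unfold gridAbscissa
  rw [div_le_iff₀ (by positivity)]
  nlinarith

theorem volume_Icc_inter_manhattanVoronoiCell_grid {n i : ℕ} {ρ : ℝ} {b : ℝ × ℝ}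
    (hi : 1 ≤ i) (hin : i + 1 ≤ n) (hb : b.2 ∈ Icc (0 : ℝ) 1)
    (hbl : gridAbscissa n ρ i + |b.2 - 1 / 2| < b.1)
    (hbr : b.1 < gridAbscissa n ρ (i + 1) - |b.2 - 1 / 2|) :
    volume (Icc (0, 0) (ρ, 1) ∩ manhattanVoronoiCell (grid n ρ) b)
      = ENNReal.ofReal (ρ / (2 * n) - (b.2 - 1 / 2) ^ 2) := by
  have hρ : 0 ≤ ρ := by
    have hn : (0 : ℝ) < n := by exact_mod_cast (show 0 < n by omega)
    have := gridAbscissa_succ_sub n ρ i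
    have : 0 < ρ / n := by linarith [abs_nonneg (b.2 - 1 / 2)]
    exact ((div_pos_iff_of_pos_right hn).1 this).le
  have hW : ∀ w ∈ grid n ρ, w.2 = 1 / 2 ∧
      (w.1 ≤ gridAbscissa n ρ i ∨ gridAbscissa n ρ (i + 1) ≤ w.1) := by
    rintro _ ⟨j, -, -, rfl⟩
    exact ⟨rfl, (le_or_gt j i).imp (gridAbscissa_mono hρ ·) (gridAbscissa_mono hρ ·)⟩
  have hmem : ∀ j, 1 ≤ j → j ≤ n → (gridAbscissa n ρ j, 1 / 2) ∈ grid n ρ :=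
    fun j hj hjn => ⟨j, hj, hjn, rfl⟩
  rw [volume_Icc_inter_manhattanVoronoiCell_of_forall_snd_eq (hmem i hi (by omega))
    (hmem (i + 1) (by omega) hin) hW hbl hbr (gridAbscissa_nonneg hρ hi)
    (gridAbscissa_le hρ (by omega) hin) (by norm_num) hb, gridAbscissa_succ_sub]
  congr 1
  ring

theorem black_cell_area_against_1xn_grid_general (n : ℕ) (ρ : ℝ) :
    (∀ b : ℝ × ℝ, b.2 = 1/2 →
      (∃ i : ℕ, 1 ≤ i ∧ i ≤ n - 1 ∧
        (2*(i:ℝ) - 1) * ρ / (2*(n:ℝ)) < b.1 ∧ b.1 < (2*(i:ℝ) + 1) * ρ / (2*(n:ℝ))) →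
      volume {q : ℝ × ℝ | q ∈ Set.Icc ((0, 0) : ℝ × ℝ) (ρ, 1) ∧
          ∀ w ∈ grid n ρ, dM q b < dM q w}
        = ENNReal.ofReal (ρ / (2*(n:ℝ)))) ∧
    (∀ b : ℝ × ℝ, ∀ t : ℝ, 0 < t → |b.2 - 1/2| = t →
      b ∈ Set.Icc ((0, 0) : ℝ × ℝ) (ρ, 1) →
      (∃ i : ℕ, 1 ≤ i ∧ i ≤ n - 1 ∧
        (2*(i:ℝ) - 1) * ρ / (2*(n:ℝ)) + t < b.1 ∧ b.1 < (2*(i:ℝ) + 1) * ρ / (2*(n:ℝ)) - t) →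
      volume {q : ℝ × ℝ | q ∈ Set.Icc ((0, 0) : ℝ × ℝ) (ρ, 1) ∧
          ∀ w ∈ grid n ρ, dM q b < dM q w}
        = ENNReal.ofReal (ρ / (2*(n:ℝ)) - t^2)) := by
  have hsucc (i : ℕ) : (2 * (i : ℝ) + 1) * ρ / (2 * (n : ℝ)) = gridAbscissa n ρ (i + 1) := by
    unfold gridAbscissa; push_cast; ring
  refine ⟨fun b hb ⟨i, hi, hin, hbl, hbr⟩ => ?_, fun b t _ hbt hbR ⟨i, hi, hin, hbl, hbr⟩ => ?_⟩
  · rw [hsucc] at hbr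
    have hb₀ : |b.2 - 1 / 2| = 0 := by rw [hb, sub_self, abs_zero]
    have := volume_Icc_inter_manhattanVoronoiCell_grid (n := n) (ρ := ρ) hi (by omega)
      (by rw [hb]; norm_num) (by rwa [hb₀, add_zero]) (by rwa [hb₀, sub_zero])
    rwa [hb, sub_self, zero_pow two_ne_zero, sub_zero] at this
  · rw [hsucc] at hbr
    subst hbt
    rw [sq_abs]
    exact volume_Icc_inter_manhattanVoronoiCell_grid hi (by omega) ⟨hbR.1.2, hbR.2.2⟩ hbl hbr

theorem black_cell_area_against_1xn_grid (n : ℕ) (hn : 1 ≤ n) (ρ : ℝ) (hρ : (n : ℝ) ≤ ρ) :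
    (∀ b : ℝ × ℝ, b.2 = 1/2 →
      (∃ i : ℕ, 1 ≤ i ∧ i ≤ n - 1 ∧
        (2*(i:ℝ) - 1) * ρ / (2*(n:ℝ)) < b.1 ∧ b.1 < (2*(i:ℝ) + 1) * ρ / (2*(n:ℝ))) →
      volume {q : ℝ × ℝ | q ∈ Set.Icc ((0, 0) : ℝ × ℝ) (ρ, 1) ∧
          ∀ w ∈ grid n ρ, dM q b < dM q w}
        = ENNReal.ofReal (ρ / (2*(n:ℝ)))) ∧
    (∀ b : ℝ × ℝ, ∀ t : ℝ, 0 < t → |b.2 - 1/2| = t →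
      b ∈ Set.Icc ((0, 0) : ℝ × ℝ) (ρ, 1) →
      (∃ i : ℕ, 1 ≤ i ∧ i ≤ n - 1 ∧
        (2*(i:ℝ) - 1) * ρ / (2*(n:ℝ)) + t < b.1 ∧ b.1 < (2*(i:ℝ) + 1) * ρ / (2*(n:ℝ)) - t) →
      volume {q : ℝ × ℝ | q ∈ Set.Icc ((0, 0) : ℝ × ℝ) (ρ, 1) ∧
          ∀ w ∈ grid n ρ, dM q b < dM q w}
        = ENNReal.ofReal (ρ / (2*(n:ℝ)) - t^2)) :=
  black_cell_area_against_1xn_grid_general n ρ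
end

section
/- Let P be a finite point set in a rectangle R and p ∈ P with Voronoi cell V(p). Then V(p) is contained in the axis-aligned rectangle spanned by the endpoints of its four arms; i.e., if the top, bottom, left, right arms of p have lengths t, b, l, r respectively (the maximal lengths such that the corresponding segments from p lie in the closure of V(p)), then V(p) ⊆ [p_x - l, p_x + r] × [p_y - b, p_y + t]. -/
/-- The length of the arm of the cell `C` at `p` in direction `v`: the supremum of `s ≥ 0`
such that the whole segment from `p` to `p + s • v` lies in the closure of `C`. -/
noncomputable def armLen (C : Set (ℝ × ℝ)) (p v : ℝ × ℝ) : ℝ :=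
  sSup {s : ℝ | 0 ≤ s ∧ ∀ u : ℝ, 0 ≤ u → u ≤ s → p + u • v ∈ closure C}

/-!
If `q` lies in the cell of `p`, then every point `m` of the axis-parallel box spanned by `p` and
`q` lies on a Manhattan geodesic from `q` to `p`, so for every other site `r`,
`d(m, r) ≥ d(q, r) - d(q, m) > d(q, p) - d(q, m) = d(m, p)`: the whole box lies in the cell.
The box is convex and contains the corners `(q.1, p.2)` and `(p.1, q.2)`, so the arms of `p`
reach at least as far as `q` in each of the four directions.
-/

open Set Bornology

lemma abs_sub_add_abs_sub_of_mem_uIcc {a b c : ℝ} (h : c ∈ uIcc a b) :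
    |b - c| + |c - a| = |b - a| := by
  rw [← sub_add_sub_cancel b c a, eq_comm, abs_add_eq_add_abs_iff]
  rcases mem_uIcc.mp h with h | h
  · exact Or.inl ⟨by linarith, by linarith⟩
  · exact Or.inr ⟨by linarith, by linarith⟩

lemma dM_add_dM_of_mem_uIcc {p q m : ℝ × ℝ} (hm : m ∈ uIcc p q) :
    dM q m + dM m p = dM q p := by
  rw [uIcc_prod_eq, mem_prod] at hm
  simp only [dM]
  linarith [abs_sub_add_abs_sub_of_mem_uIcc hm.1, abs_sub_add_abs_sub_of_mem_uIcc hm.2]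

lemma mem_cell_of_dM_add_dM {R : Set (ℝ × ℝ)} {P : Finset (ℝ × ℝ)} {p q m : ℝ × ℝ}
    (hq : q ∈ cell R P p) (hm : m ∈ R) (hqmp : dM q m + dM m p = dM q p) :
    m ∈ cell R P p := by
  refine ⟨hm, fun r hr hrp => ?_⟩
  have hqr := hq.2 r hr hrp
  have h₁ := abs_sub_le q.1 m.1 r.1
  have h₂ := abs_sub_le q.2 m.2 r.2
  simp only [dM] at *
  linarith

lemma uIcc_subset_cell {a b p q : ℝ × ℝ} {P : Finset (ℝ × ℝ)} (hp : p ∈ Icc a b)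
    (hq : q ∈ cell (Icc a b) P p) : uIcc p q ⊆ cell (Icc a b) P p := fun _ hm =>
  mem_cell_of_dM_add_dM hq (uIcc_subset_Icc hp hq.1 hm) (dM_add_dM_of_mem_uIcc hm)

lemma armLen_nonneg (C : Set (ℝ × ℝ)) (p v : ℝ × ℝ) : 0 ≤ armLen C p v :=
  Real.sSup_nonneg fun _ hs => hs.1

lemma le_armLen {C : Set (ℝ × ℝ)} (hC : IsBounded C) {p v : ℝ × ℝ} (hv : v ≠ 0) {s : ℝ}
    (hs : ∀ u ∈ Icc 0 s, p + u • v ∈ closure C) : s ≤ armLen C p v := by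
  rcases lt_or_ge s 0 with hs₀ | hs₀
  · exact hs₀.le.trans (armLen_nonneg C p v)
  obtain ⟨M, hM⟩ := isBounded_iff_forall_norm_le.mp hC.closure
  refine le_csSup ⟨(M + ‖p‖) / ‖v‖, fun t ⟨ht₀, ht⟩ => ?_⟩
    ⟨hs₀, fun u hu hus => hs u ⟨hu, hus⟩⟩
  rw [le_div_iff₀ (norm_pos_iff.mpr hv)]
  calc t * ‖v‖ = ‖(p + t • v) - p‖ := by
        rw [add_sub_cancel_left, norm_smul, Real.norm_of_nonneg ht₀]
    _ ≤ ‖p + t • v‖ + ‖p‖ := norm_sub_le _ _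
    _ ≤ M + ‖p‖ := by gcongr; exact hM _ (ht t ht₀ le_rfl)

lemma le_armLen_of_convex {C K : Set (ℝ × ℝ)} (hC : IsBounded C) (hK : Convex ℝ K)
    (hKC : K ⊆ closure C) {p v : ℝ × ℝ} (hv : v ≠ 0) (hp : p ∈ K) {s : ℝ}
    (hs : p + s • v ∈ K) : s ≤ armLen C p v := by
  refine le_armLen hC hv fun u ⟨hu₀, hus⟩ => hKC ?_
  rcases hu₀.eq_or_lt with rfl | hu
  · simpa using hp
  have hs₀ : 0 < s := hu.trans_le hus
  have := hK.add_smul_mem hp hs ⟨div_nonneg hu₀ hs₀.le, div_le_one_of_le₀ hus hs₀.le⟩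
  rwa [smul_smul, div_mul_cancel₀ _ hs₀.ne'] at this

theorem cell_in_rectangle_spanned_by_arms_general (w h : ℝ)
    (P : Finset (ℝ × ℝ)) (hPR : ↑P ⊆ Set.Icc ((0, 0) : ℝ × ℝ) (w, h))
    (p : ℝ × ℝ) (hp : p ∈ P) (q : ℝ × ℝ)
    (hq : q ∈ cell (Set.Icc ((0, 0) : ℝ × ℝ) (w, h)) P p) :
    p.1 - armLen (cell (Set.Icc ((0, 0) : ℝ × ℝ) (w, h)) P p) p (-1, 0) ≤ q.1 ∧
    q.1 ≤ p.1 + armLen (cell (Set.Icc ((0, 0) : ℝ × ℝ) (w, h)) P p) p (1, 0) ∧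
    p.2 - armLen (cell (Set.Icc ((0, 0) : ℝ × ℝ) (w, h)) P p) p (0, -1) ≤ q.2 ∧
    q.2 ≤ p.2 + armLen (cell (Set.Icc ((0, 0) : ℝ × ℝ) (w, h)) P p) p (0, 1) := by
  have hC : IsBounded (cell (Icc ((0, 0) : ℝ × ℝ) (w, h)) P p) :=
    Metric.isBounded_Icc _ _ |>.subset fun _ hm => hm.1
  have hbox := (uIcc_subset_cell (hPR hp) hq).trans subset_closure
  have arm {v m : ℝ × ℝ} {s : ℝ} (hv : v ≠ 0) (hm : m ∈ uIcc p q)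
      (hsm : p + s • v = m) :=
    le_armLen_of_convex hC (convex_Icc _ _) hbox hv left_mem_uIcc (hsm ▸ hm)
  have hpq₁ : ((q.1, p.2) : ℝ × ℝ) ∈ uIcc p q := by
    rw [uIcc_prod_eq]; exact ⟨right_mem_uIcc, left_mem_uIcc⟩
  have hpq₂ : ((p.1, q.2) : ℝ × ℝ) ∈ uIcc p q := by
    rw [uIcc_prod_eq]; exact ⟨left_mem_uIcc, right_mem_uIcc⟩
  refine ⟨?_, ?_, ?_, ?_⟩
  · linarith [arm (v := (-1, 0)) (s := p.1 - q.1) (by simp) hpq₁ (by ext <;> simp)]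
  · linarith [arm (v := (1, 0)) (s := q.1 - p.1) (by simp) hpq₁ (by ext <;> simp)]
  · linarith [arm (v := (0, -1)) (s := p.2 - q.2) (by simp) hpq₂ (by ext <;> simp)]
  · linarith [arm (v := (0, 1)) (s := q.2 - p.2) (by simp) hpq₂ (by ext <;> simp)]

theorem cell_in_rectangle_spanned_by_arms (w h : ℝ) (hw : 0 < w) (hh : 0 < h)
    (P : Finset (ℝ × ℝ)) (hPR : ↑P ⊆ Set.Icc ((0, 0) : ℝ × ℝ) (w, h))
    (p : ℝ × ℝ) (hp : p ∈ P) (q : ℝ × ℝ)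
    (hq : q ∈ cell (Set.Icc ((0, 0) : ℝ × ℝ) (w, h)) P p) :
    p.1 - armLen (cell (Set.Icc ((0, 0) : ℝ × ℝ) (w, h)) P p) p (-1, 0) ≤ q.1 ∧
    q.1 ≤ p.1 + armLen (cell (Set.Icc ((0, 0) : ℝ × ℝ) (w, h)) P p) p (1, 0) ∧
    p.2 - armLen (cell (Set.Icc ((0, 0) : ℝ × ℝ) (w, h)) P p) p (0, -1) ≤ q.2 ∧
    q.2 ≤ p.2 + armLen (cell (Set.Icc ((0, 0) : ℝ × ℝ) (w, h)) P p) p (0, 1) :=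
  cell_in_rectangle_spanned_by_arms_general w h P hPR p hp q hq
end
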